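/- Let parties j = 1,…,N hold q_j qubits each, X_j = Y_j = (ℂ²)^{⊗q_j}, X := ⊗_j X_j, Y := ⊗_j Y_j, and q := Σ_j q_j. For i⃗ ∈ {0,1,2,3}^q let Γ^{i⃗} := ⊗_j (I_{X_j} ⊗ σ_{i⃗(j)}) |Γ_j⟩⟨Γ_j| (I_{X_j} ⊗ σ_{i⃗(j)}) be the tensor product over parties of the Pauli-rotated maximally entangled projectors, where |Γ_j⟩ := Σ_k |k⟩_{X_j}|k⟩_{Y_j} and i⃗(j) is the block of i⃗ belonging to party j. Then: (i) L^NS_{XY}(Γ^{i⃗}) = Γ^{i⃗} for every i⃗; (ii) for every real m and every Hermitian matrix F on X⊗Y with L^NS_{XY}(F) = (m/2^q)·I_{XY}, one has tr[F·Γ^{i⃗}] = m for every i⃗ ∈ {0,1,2,3}^q. -/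
import Mathlib


/-!
STATEMENT 17: For N parties holding q_j qubits each, the product Pauli-rotated
maximally entangled projectors Γ^{i⃗} satisfy (i) L^NS_{XY}(Γ^{i⃗}) = Γ^{i⃗}, and
(ii) every Hermitian F with L^NS_{XY}(F) = (m/2^q)·I satisfies tr[F·Γ^{i⃗}] = m.
-/

open Matrix

namespace ICO

/-- The four Pauli matrices (σ₀ = I). -/
noncomputable def pauli : Fin 4 → Matrix (Fin 2) (Fin 2) ℂ :=
  ![1, !![0, 1; 1, 0], !![0, -Complex.I; Complex.I, 0], !![1, 0; 0, -1]]

/-- A Pauli string `σ_{i⃗} := σ_{i₁} ⊗ ⋯ ⊗ σ_{i_q}` on q qubits. -/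
noncomputable def pauliStr {q : ℕ} (iv : Fin q → Fin 4) :
    Matrix (Fin q → Fin 2) (Fin q → Fin 2) ℂ :=
  Matrix.of fun v w => ∏ t, pauli (iv t) (v t) (w t)

variable {N : ℕ} {q : Fin N → ℕ}

/-- Qubit register of party j. -/
abbrev Reg (q : Fin N → ℕ) (j : Fin N) : Type := Fin (q j) → Fin 2

/-- Smoothing over the factor `Y j`. -/
noncomputable def floorY (j : Fin N)
    (P : Matrix ((∀ i, Reg q i) × (∀ i, Reg q i)) ((∀ i, Reg q i) × (∀ i, Reg q i)) ℂ) :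
    Matrix ((∀ i, Reg q i) × (∀ i, Reg q i)) ((∀ i, Reg q i) × (∀ i, Reg q i)) ℂ :=
  Matrix.of fun p r =>
    if p.2 j = r.2 j then
      (Fintype.card (Reg q j) : ℂ)⁻¹ *
        ∑ c : Reg q j, P (p.1, Function.update p.2 j c) (r.1, Function.update r.2 j c)
    else 0

/-- Smoothing over the factors `X j ⊗ Y j`. -/
noncomputable def floorXY (j : Fin N)
    (P : Matrix ((∀ i, Reg q i) × (∀ i, Reg q i)) ((∀ i, Reg q i) × (∀ i, Reg q i)) ℂ) :
    Matrix ((∀ i, Reg q i) × (∀ i, Reg q i)) ((∀ i, Reg q i) × (∀ i, Reg q i)) ℂ :=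
  Matrix.of fun p r =>
    if p.1 j = r.1 j ∧ p.2 j = r.2 j then
      ((Fintype.card (Reg q j) : ℂ) * (Fintype.card (Reg q j) : ℂ))⁻¹ *
        ∑ a : Reg q j, ∑ c : Reg q j,
          P (Function.update p.1 j a, Function.update p.2 j c)
            (Function.update r.1 j a, Function.update r.2 j c)
    else 0

/-- `L^NS_{X_jY_j}(P) := P − ⌊Y_j⌋P + ⌊X_jY_j⌋P`. -/
noncomputable def LNSstep (j : Fin N)
    (P : Matrix ((∀ i, Reg q i) × (∀ i, Reg q i)) ((∀ i, Reg q i) × (∀ i, Reg q i)) ℂ) :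
    Matrix ((∀ i, Reg q i) × (∀ i, Reg q i)) ((∀ i, Reg q i) × (∀ i, Reg q i)) ℂ :=
  P - floorY j P + floorXY j P

/-- `L^NS_{XY} := L^NS_{X₁Y₁} ∘ ⋯ ∘ L^NS_{X_NY_N}`. -/
noncomputable def LNS
    (P : Matrix ((∀ i, Reg q i) × (∀ i, Reg q i)) ((∀ i, Reg q i) × (∀ i, Reg q i)) ℂ) :
    Matrix ((∀ i, Reg q i) × (∀ i, Reg q i)) ((∀ i, Reg q i) × (∀ i, Reg q i)) ℂ :=
  (List.finRange N).foldr (fun j Q => LNSstep j Q) P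

/-- `Γ^{i⃗} := ⊗_j (I ⊗ σ_{i⃗(j)}) |Γ_j⟩⟨Γ_j| (I ⊗ σ_{i⃗(j)})`: the tensor product over
parties of the Pauli-rotated maximally entangled projectors. -/
noncomputable def GammaProd (iv : ∀ j, Fin (q j) → Fin 4) :
    Matrix ((∀ i, Reg q i) × (∀ i, Reg q i)) ((∀ i, Reg q i) × (∀ i, Reg q i)) ℂ :=
  Matrix.of fun p r =>
    ∏ j, (pauliStr (iv j) (p.2 j) (p.1 j) * pauliStr (iv j) (r.1 j) (r.2 j))

-- ## auxiliary lemmas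

lemma pauli_sq (i : Fin 4) (a b : Fin 2) :
    ∑ x : Fin 2, pauli i a x * pauli i x b = if a = b then 1 else 0 := by
  fin_cases i <;> fin_cases a <;> fin_cases b <;>
    simp [pauli, Fin.sum_univ_two, Matrix.one_apply, Complex.I_mul_I]

lemma pauliStr_mul {n : ℕ} (iv : Fin n → Fin 4) (a b : Fin n → Fin 2) :
    ∑ c : Fin n → Fin 2, pauliStr iv a c * pauliStr iv c b = if a = b then 1 else 0 := by
  have h : ∀ c : Fin n → Fin 2, pauliStr iv a c * pauliStr iv c b
      = ∏ t, (pauli (iv t) (a t) (c t) * pauli (iv t) (c t) (b t)) := by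
    intro c
    simp [pauliStr, Finset.prod_mul_distrib]
  simp only [h]
  rw [← Fintype.piFinset_univ, ← Finset.prod_univ_sum (fun _ => Finset.univ)
    (fun t x => pauli (iv t) (a t) x * pauli (iv t) x (b t))]
  simp only [pauli_sq]
  by_cases hab : a = b
  · simp [hab]
  · obtain ⟨t, ht⟩ := Function.ne_iff.mp hab
    rw [if_neg hab]
    exact Finset.prod_eq_zero (Finset.mem_univ t) (by simp [ht])

lemma avg_symm {ι Z : Type*} [Fintype ι] [Fintype Z] [DecidableEq Z]
    (π : ι → Z) (σ : Z → ι → ι)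
    (h1 : ∀ z p, π (σ z p) = z)
    (h2 : ∀ z z' p, σ z (σ z' p) = σ z p)
    (h3 : ∀ p, σ (π p) p = p)
    (K : ℂ) (A B : Matrix ι ι ℂ) :
    ∑ p, ∑ r, (if π p = π r then K * ∑ z, A (σ z p) (σ z r) else 0) * B r p
    = ∑ p, ∑ r, A p r * (if π r = π p then K * ∑ z, B (σ z r) (σ z p) else 0) := by
  classical
  have hL : ∀ p r : ι, (if π p = π r then K * ∑ z, A (σ z p) (σ z r) else 0) * B r p
      = ∑ z, (if π p = π r then K * (A (σ z p) (σ z r) * B r p) else 0) := by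
    intro p r
    by_cases h : π p = π r
    · rw [if_pos h, Finset.mul_sum, Finset.sum_mul]
      refine Finset.sum_congr rfl fun z _ => ?_
      rw [if_pos h]; ring
    · simp [h]
  have hR : ∀ p r : ι, A p r * (if π r = π p then K * ∑ z, B (σ z r) (σ z p) else 0)
      = ∑ z, (if π p = π r then K * (A p r * B (σ z r) (σ z p)) else 0) := by
    intro p r
    by_cases h : π p = π r
    · rw [if_pos h.symm]
      simp only [Finset.mul_sum]
      refine Finset.sum_congr rfl fun z _ => ?_
      rw [if_pos h]; ring
    · rw [if_neg (fun hh => h hh.symm)]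
      simp [h]
  simp only [hL, hR]
  set F : ι × ι × Z → ℂ := fun x =>
    if π x.1 = π x.2.1 then K * (A (σ x.2.2 x.1) (σ x.2.2 x.2.1) * B x.2.1 x.1) else 0 with hF
  set G : ι × ι × Z → ℂ := fun x =>
    if π x.1 = π x.2.1 then K * (A x.1 x.2.1 * B (σ x.2.2 x.2.1) (σ x.2.2 x.1)) else 0 with hG
  set ψ : ι × ι × Z → ι × ι × Z := fun x =>
    if π x.1 = π x.2.1 then (σ x.2.2 x.1, σ x.2.2 x.2.1, π x.1) else x with hψ
  have hinv : Function.Involutive ψ := by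
    rintro ⟨p, r, z⟩
    by_cases h : π p = π r
    · simp only [hψ, if_pos h]
      rw [if_pos (by rw [h1, h1])]
      simp only [h2, h3]
      rw [h1, h, h3]
    · simp only [hψ, if_neg h, if_neg h]
  have main : ∑ x : ι × ι × Z, F x = ∑ x : ι × ι × Z, G x := by
    refine Fintype.sum_bijective ψ hinv.bijective F G fun x => ?_
    obtain ⟨p, r, z⟩ := x
    by_cases h : π p = π r
    · simp only [hF, hG, hψ, if_pos h]
      rw [if_pos (by rw [h1, h1])]
      simp only [h2, h3]
      rw [h, h3]
    · simp only [hF, hG, hψ, if_neg h, if_neg h]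
  simpa only [Fintype.sum_prod_type] using main

lemma avg_symm' {ι Z : Type*} [Fintype ι] [Fintype Z] [DecidableEq Z]
    (π : ι → Z) (σ : Z → ι → ι)
    (h1 : ∀ z p, π (σ z p) = z)
    (h2 : ∀ z z' p, σ z (σ z' p) = σ z p)
    (h3 : ∀ p, σ (π p) p = p)
    (K : ℂ) (M : Matrix ι ι ℂ → Matrix ι ι ℂ)
    (hM : ∀ P (p r : ι), M P p r = if π p = π r then K * ∑ z, P (σ z p) (σ z r) else 0)
    (A B : Matrix ι ι ℂ) :
    ∑ p, ∑ r, M A p r * B r p = ∑ p, ∑ r, A p r * M B r p := by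
  simp only [hM]
  exact avg_symm π σ h1 h2 h3 K A B

lemma trace_mul_eq {ι : Type*} [Fintype ι] (A B : Matrix ι ι ℂ) :
    (A * B).trace = ∑ p, ∑ r, A p r * B r p := by
  simp [Matrix.trace, Matrix.diag, Matrix.mul_apply]

set_option maxHeartbeats 1000000 in
lemma floorY_symm (j : Fin N)
    (A B : Matrix ((∀ i, Reg q i) × (∀ i, Reg q i)) ((∀ i, Reg q i) × (∀ i, Reg q i)) ℂ) :
    (floorY j A * B).trace = (A * floorY j B).trace := by
  rw [trace_mul_eq, trace_mul_eq]
  exact avg_symm' (ι := ((∀ i, Reg q i) × (∀ i, Reg q i))) (Z := Reg q j)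
    (fun p => p.2 j) (fun c p => (p.1, Function.update p.2 j c))
    (fun z p => by simp) (fun z z' p => by simp [Function.update_idem])
    (fun p => by simp) ((Fintype.card (Reg q j) : ℂ))⁻¹ (floorY j)
    (fun P p r => rfl) A B

lemma floorXY_apply' (j : Fin N)
    (A : Matrix ((∀ i, Reg q i) × (∀ i, Reg q i)) ((∀ i, Reg q i) × (∀ i, Reg q i)) ℂ)
    (p r : (∀ i, Reg q i) × (∀ i, Reg q i)) :
    floorXY j A p r =
      if (p.1 j, p.2 j) = (r.1 j, r.2 j) then
        ((Fintype.card (Reg q j) : ℂ) * (Fintype.card (Reg q j) : ℂ))⁻¹ *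
          ∑ z : Reg q j × Reg q j,
            A (Function.update p.1 j z.1, Function.update p.2 j z.2)
              (Function.update r.1 j z.1, Function.update r.2 j z.2)
      else 0 := by
  simp only [floorXY, Matrix.of_apply, Prod.mk.injEq, Fintype.sum_prod_type]

set_option maxHeartbeats 1000000 in
lemma floorXY_symm (j : Fin N)
    (A B : Matrix ((∀ i, Reg q i) × (∀ i, Reg q i)) ((∀ i, Reg q i) × (∀ i, Reg q i)) ℂ) :
    (floorXY j A * B).trace = (A * floorXY j B).trace := by
  rw [trace_mul_eq, trace_mul_eq]
  exact avg_symm' (ι := ((∀ i, Reg q i) × (∀ i, Reg q i))) (Z := Reg q j × Reg q j)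
    (fun p => (p.1 j, p.2 j))
    (fun z p => (Function.update p.1 j z.1, Function.update p.2 j z.2))
    (fun z p => by simp) (fun z z' p => by simp [Function.update_idem])
    (fun p => by simp)
    (((Fintype.card (Reg q j) : ℂ)) * (Fintype.card (Reg q j) : ℂ))⁻¹ (floorXY j)
    (fun P p r => floorXY_apply' j P p r) A B

lemma step_symm (j : Fin N)
    (A B : Matrix ((∀ i, Reg q i) × (∀ i, Reg q i)) ((∀ i, Reg q i) × (∀ i, Reg q i)) ℂ) :
    (LNSstep j A * B).trace = (A * LNSstep j B).trace := by
  simp only [LNSstep, Matrix.sub_mul, Matrix.add_mul, Matrix.mul_sub, Matrix.mul_add,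
    Matrix.trace_add, Matrix.trace_sub, floorY_symm, floorXY_symm]

lemma gamma_entry_Y (iv : ∀ j, Fin (q j) → Fin 4) (j : Fin N)
    (p r : (∀ i, Reg q i) × (∀ i, Reg q i)) (c : Reg q j) :
    GammaProd iv (p.1, Function.update p.2 j c) (r.1, Function.update r.2 j c)
    = (pauliStr (iv j) c (p.1 j) * pauliStr (iv j) (r.1 j) c) *
      ∏ j' ∈ Finset.univ.erase j,
        (pauliStr (iv j') (p.2 j') (p.1 j') * pauliStr (iv j') (r.1 j') (r.2 j')) := by
  rw [GammaProd, Matrix.of_apply, ← Finset.mul_prod_erase _ _ (Finset.mem_univ j)]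
  congr 1
  · simp
  · refine Finset.prod_congr rfl fun j' hj' => ?_
    have hne := Finset.ne_of_mem_erase hj'
    simp [Function.update_of_ne hne]

lemma gamma_entry_XY (iv : ∀ j, Fin (q j) → Fin 4) (j : Fin N)
    (p r : (∀ i, Reg q i) × (∀ i, Reg q i)) (a c : Reg q j) :
    GammaProd iv (Function.update p.1 j a, Function.update p.2 j c)
      (Function.update r.1 j a, Function.update r.2 j c)
    = (pauliStr (iv j) c a * pauliStr (iv j) a c) *
      ∏ j' ∈ Finset.univ.erase j,
        (pauliStr (iv j') (p.2 j') (p.1 j') * pauliStr (iv j') (r.1 j') (r.2 j')) := by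
  rw [GammaProd, Matrix.of_apply, ← Finset.mul_prod_erase _ _ (Finset.mem_univ j)]
  congr 1
  · simp
  · refine Finset.prod_congr rfl fun j' hj' => ?_
    have hne := Finset.ne_of_mem_erase hj'
    simp [Function.update_of_ne hne]

lemma card_ne_zero (j : Fin N) : (Fintype.card (Reg q j) : ℂ) ≠ 0 :=
  Nat.cast_ne_zero.mpr Fintype.card_pos.ne'

lemma floor_eq (iv : ∀ j, Fin (q j) → Fin 4) (j : Fin N) :
    floorY j (GammaProd iv) = floorXY j (GammaProd iv) := by
  ext p r
  set C := ∏ j' ∈ Finset.univ.erase j,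
    (pauliStr (iv j') (p.2 j') (p.1 j') * pauliStr (iv j') (r.1 j') (r.2 j')) with hC
  have hd := card_ne_zero (q := q) j
  have hY : floorY j (GammaProd iv) p r
      = if p.1 j = r.1 j ∧ p.2 j = r.2 j then (Fintype.card (Reg q j) : ℂ)⁻¹ * C else 0 := by
    rw [floorY, Matrix.of_apply]
    by_cases h2 : p.2 j = r.2 j
    · rw [if_pos h2]
      have hsum : ∑ c : Reg q j, GammaProd iv (p.1, Function.update p.2 j c)
            (r.1, Function.update r.2 j c)
          = (if r.1 j = p.1 j then 1 else 0) * C := by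
        rw [← pauliStr_mul (iv j) (r.1 j) (p.1 j), Finset.sum_mul]
        refine Finset.sum_congr rfl fun c _ => ?_
        rw [gamma_entry_Y]
        ring
      rw [hsum]
      by_cases h1 : p.1 j = r.1 j
      · simp [h1, h2]
      · rw [if_neg (fun hh : r.1 j = p.1 j => h1 hh.symm),
          if_neg (fun hh : p.1 j = r.1 j ∧ p.2 j = r.2 j => h1 hh.1)]
        ring
    · rw [if_neg h2, if_neg fun hh => h2 hh.2]
  have hXY : floorXY j (GammaProd iv) p r
      = if p.1 j = r.1 j ∧ p.2 j = r.2 j then (Fintype.card (Reg q j) : ℂ)⁻¹ * C else 0 := by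
    rw [floorXY, Matrix.of_apply]
    by_cases h : p.1 j = r.1 j ∧ p.2 j = r.2 j
    · rw [if_pos h, if_pos h]
      have hsum : ∑ a : Reg q j, ∑ c : Reg q j,
            GammaProd iv (Function.update p.1 j a, Function.update p.2 j c)
              (Function.update r.1 j a, Function.update r.2 j c)
          = (Fintype.card (Reg q j) : ℂ) * C := by
        rw [Finset.sum_comm]
        have inner : ∀ c : Reg q j, ∑ a : Reg q j,
              GammaProd iv (Function.update p.1 j a, Function.update p.2 j c)
                (Function.update r.1 j a, Function.update r.2 j c) = C := by
          intro c
          have : ∑ a : Reg q j, (pauliStr (iv j) c a * pauliStr (iv j) a c) = 1 := by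
            rw [pauliStr_mul, if_pos rfl]
          calc ∑ a : Reg q j, GammaProd iv (Function.update p.1 j a, Function.update p.2 j c)
                (Function.update r.1 j a, Function.update r.2 j c)
              = (∑ a : Reg q j, (pauliStr (iv j) c a * pauliStr (iv j) a c)) * C := by
                rw [Finset.sum_mul]
                exact Finset.sum_congr rfl fun a _ => gamma_entry_XY iv j p r a c
            _ = C := by rw [this, one_mul]
        simp only [inner]
        rw [Finset.sum_const, Finset.card_univ, nsmul_eq_mul]
      rw [hsum]
      field_simp
    · rw [if_neg h, if_neg h]
  rw [hY, hXY]

lemma step_fix (iv : ∀ j, Fin (q j) → Fin 4) (j : Fin N) :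
    LNSstep j (GammaProd iv) = GammaProd iv := by
  rw [LNSstep, floor_eq]
  abel

lemma foldr_fix (iv : ∀ j, Fin (q j) → Fin 4) (l : List (Fin N)) :
    l.foldr (fun j Q => LNSstep j Q) (GammaProd iv) = GammaProd iv := by
  induction l with
  | nil => rfl
  | cons j l ih => rw [List.foldr_cons, ih, step_fix]

lemma LNS_gamma (iv : ∀ j, Fin (q j) → Fin 4) : LNS (GammaProd iv) = GammaProd iv :=
  foldr_fix iv _

lemma foldr_symm (iv : ∀ j, Fin (q j) → Fin 4)
    (A : Matrix ((∀ i, Reg q i) × (∀ i, Reg q i)) ((∀ i, Reg q i) × (∀ i, Reg q i)) ℂ)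
    (l : List (Fin N)) :
    ((l.foldr (fun j Q => LNSstep j Q) A) * GammaProd iv).trace = (A * GammaProd iv).trace := by
  induction l with
  | nil => rfl
  | cons j l ih =>
    rw [List.foldr_cons, step_symm, step_fix, ih]

lemma trace_gamma (iv : ∀ j, Fin (q j) → Fin 4) :
    (GammaProd iv).trace = (2 : ℂ) ^ (∑ j, q j) := by
  have h1 : (GammaProd iv).trace = ∑ x : ∀ i, Reg q i, ∑ y : ∀ i, Reg q i,
      ∏ j, (pauliStr (iv j) (y j) (x j) * pauliStr (iv j) (x j) (y j)) := by
    rw [Matrix.trace, Fintype.sum_prod_type]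
    rfl
  have inner : ∀ x : ∀ i, Reg q i, ∑ y : ∀ i, Reg q i,
      ∏ j, (pauliStr (iv j) (y j) (x j) * pauliStr (iv j) (x j) (y j)) = 1 := by
    intro x
    rw [← Fintype.piFinset_univ, ← Finset.prod_univ_sum (fun _ => Finset.univ)
      (fun j b => pauliStr (iv j) b (x j) * pauliStr (iv j) (x j) b)]
    refine Finset.prod_eq_one fun j _ => ?_
    have : ∑ b : Reg q j, pauliStr (iv j) b (x j) * pauliStr (iv j) (x j) b
        = ∑ b : Reg q j, pauliStr (iv j) (x j) b * pauliStr (iv j) b (x j) :=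
      Finset.sum_congr rfl fun b _ => mul_comm _ _
    rw [this, pauliStr_mul, if_pos rfl]
  rw [h1]
  simp only [inner]
  rw [Finset.sum_const, Finset.card_univ, nsmul_eq_mul, mul_one]
  have : Fintype.card (∀ i, Reg q i) = 2 ^ (∑ j, q j) := by
    rw [Fintype.card_pi]
    simp [Finset.prod_pow_eq_pow_sum]
  rw [this]
  push_cast
  ring

theorem gammaProd_no_signaling_and_twirl :
    (∀ iv : ∀ j, Fin (q j) → Fin 4, LNS (GammaProd iv) = GammaProd iv) ∧
    (∀ (m : ℝ)
      (F : Matrix ((∀ i, Reg q i) × (∀ i, Reg q i)) ((∀ i, Reg q i) × (∀ i, Reg q i)) ℂ),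
      F.IsHermitian →
      LNS F = ((m : ℂ) / (2 : ℂ) ^ (∑ j, q j)) • 1 →
      ∀ iv : ∀ j, Fin (q j) → Fin 4, (F * GammaProd iv).trace = (m : ℂ)) := by
  constructor
  · exact fun iv => LNS_gamma iv
  · intro m F _ hF iv
    have h2q : ((2 : ℂ) ^ (∑ j, q j)) ≠ 0 := pow_ne_zero _ two_ne_zero
    calc (F * GammaProd iv).trace
        = (LNS F * GammaProd iv).trace := (foldr_symm iv F (List.finRange N)).symm
      _ = ((((m : ℂ) / (2 : ℂ) ^ (∑ j, q j)) • 1) * GammaProd iv).trace := by rw [hF]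
      _ = ((m : ℂ) / (2 : ℂ) ^ (∑ j, q j)) * (GammaProd iv).trace := by
          rw [Matrix.smul_mul, Matrix.one_mul, Matrix.trace_smul, smul_eq_mul]
      _ = (m : ℂ) := by rw [trace_gamma]; field_simp

end ICO
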